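/- arXiv:1809.09384 — 4 statements merged into one kernel-verified Lean document; each statement's English description precedes it below -/
import Mathlib

section
/- (Weisner's theorem) Let L be a finite lattice with least element ⊥ and greatest element ⊤, and let μ denote the Möbius function of L (the inverse of the constant function 1 in the incidence algebra of L over ℤ). Then for every a ∈ L with ⊥ < a, one has Σ_{x ∈ L, x ⊔ a = ⊤} μ(⊥, x) = 0. -/
open Classical

/-- (Weisner's theorem) Let `L` be a finite lattice with least element `⊥` and
greatest element `⊤`, and let `μ` be its Möbius function, characterized by
`μ x x = 1` and `Σ_{x ≤ z ≤ y} μ x z = 0` for `x < y`. Then for every `a > ⊥`,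
`Σ_{x ⊔ a = ⊤} μ ⊥ x = 0`. -/
theorem weisner {L : Type*} [Lattice L] [BoundedOrder L] [Fintype L]
    (μ : L → L → ℤ) (hrefl : ∀ x : L, μ x x = 1)
    (hsum : ∀ x y : L, x < y →
      ∑ z ∈ Finset.univ.filter (fun z : L => x ≤ z ∧ z ≤ y), μ x z = 0)
    (a : L) (ha : ⊥ < a) :
    ∑ x ∈ Finset.univ.filter (fun x : L => x ⊔ a = ⊤), μ ⊥ x = 0 := by
  suffices h : ∀ c : L, a ≤ c → ∑ x ∈ Finset.univ.filter (fun x : L => x ⊔ a = c), μ ⊥ x = 0 by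
    exact h ⊤ le_top
  intro c
  induction c using WellFoundedLT.induction with
  | _ c IH =>
    intro hac
    -- total sum over x ≤ c is zero
    have hzero : ∑ x ∈ Finset.univ.filter (fun x : L => x ≤ c), μ ⊥ x = 0 := by
      have := hsum ⊥ c (lt_of_lt_of_le ha hac)
      simpa using this
    set t : Finset L := Finset.univ.filter (fun b : L => a ≤ b ∧ b ≤ c) with ht
    have hfib : ∑ b ∈ t, (∑ x ∈ Finset.univ.filter (fun x : L => x ⊔ a = b), μ ⊥ x)
        = ∑ x ∈ Finset.univ.filter (fun x : L => x ≤ c), μ ⊥ x := by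
      rw [← Finset.sum_fiberwise_of_maps_to (g := fun x : L => x ⊔ a)
        (s := Finset.univ.filter (fun x : L => x ≤ c)) (t := t)]
      · apply Finset.sum_congr rfl
        intro b hb
        apply Finset.sum_congr _ (fun _ _ => rfl)
        ext x
        simp only [ht, Finset.mem_filter, Finset.mem_univ, true_and] at hb ⊢
        constructor
        · intro hx
          have : x ≤ c := le_trans (le_trans le_sup_left (le_of_eq hx)) hb.2
          exact ⟨this, hx⟩
        · intro hx; exact hx.2
      · intro x hx
        simp only [Finset.mem_filter, Finset.mem_univ, true_and, ht] at hx ⊢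
        exact ⟨le_sup_right, sup_le hx hac⟩
    have hct : c ∈ t := by simp [ht, hac]
    rw [← Finset.add_sum_erase t _ hct] at hfib
    have hrest : ∑ b ∈ t.erase c, (∑ x ∈ Finset.univ.filter (fun x : L => x ⊔ a = b), μ ⊥ x) = 0 := by
      apply Finset.sum_eq_zero
      intro b hb
      have hb' := Finset.mem_of_mem_erase hb
      simp only [ht, Finset.mem_filter, Finset.mem_univ, true_and] at hb'
      exact IH b (lt_of_le_of_ne hb'.2 (Finset.ne_of_mem_erase hb)) hb'.1
    rw [hrest, add_zero, hzero] at hfib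
    exact hfib
end

section
/- Let M be a matroid on a finite ground set E with rank function rk, let 𝒫 be the lattice of flats of M ordered by inclusion, and let μ denote the Möbius function of 𝒫. Then for all flats P ⊆ Q of M, one has (−1)^{rk(Q) − rk(P)} μ(P, Q) ≥ 0. -/
/-!
Weisner's theorem: if `c` is a closure operator on a finite poset, `x` is not closed and `y ≥ x`
is closed, then `∑ μ(x, z)` over the `z ∈ [x, y]` with `c z = y` vanishes (group the sum over
`[x, y]` by the value of `c` and induct on `y`). For flats `P ⊊ Q` pick `a ∈ Q \ P` and let
`c Z = cl(Z ∪ {a})`. A flat `Z ≠ Q` with `cl(Z ∪ {a}) = Q` has rank `rk Q - 1`, so Weisner's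
identity writes `(-1)^(rk Q - rk P) μ(P, Q)` as a sum of the terms `(-1)^(rk Z - rk P) μ(P, Z)`
with `Z ⊊ Q`, which are nonnegative by induction.
-/

open Classical

noncomputable section

/-- The rank of a subset `A` in a matroid `M`: the size of a maximal independent
subset of `A`. -/
def Matroid.mrank {α : Type*} (M : Matroid α) (A : Set α) : ℕ :=
  sSup (Set.ncard '' {I : Set α | M.Indep I ∧ I ⊆ A})

open Finset

theorem Finset.sum_filter_subtype_val {α M : Type*} [Fintype α] [AddCommMonoid M]
    (p q : α → Prop) [DecidablePred p] [DecidablePred q] (f : α → M) :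
    ∑ z ∈ (univ : Finset (Subtype p)).filter (fun z => q z.1), f z.1 =
      ∑ a ∈ univ.filter (fun a => p a ∧ q a), f a := by
  rw [← filter_filter, sum_filter, sum_filter, sum_subtype (univ.filter p) (p := p) (by simp)]

section

variable {β G : Type*} [PartialOrder β] [Fintype β] [DecidableLE β] [AddCommMonoid G]

theorem ClosureOperator.sum_mobius_filter_closure_eq_zero (c : ClosureOperator β)
    (μ : β → β → G)
    (hsum : ∀ x y, x < y → ∑ z ∈ univ.filter (fun z => x ≤ z ∧ z ≤ y), μ x z = 0)
    {x y : β} (hx : ¬ c.IsClosed x) (hy : c.IsClosed y) (hxy : x ≤ y) :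
    ∑ z ∈ univ.filter (fun z => x ≤ z ∧ z ≤ y ∧ c z = y), μ x z = 0 := by
  induction y using WellFoundedLT.induction with
  | _ y ih =>
  have hlt : x < y := hxy.lt_of_ne fun h => hx (h ▸ hy)
  have hmaps : ∀ z ∈ univ.filter (fun z => x ≤ z ∧ z ≤ y),
      c z ∈ univ.filter (fun w => x ≤ w ∧ w ≤ y ∧ c.IsClosed w) := by
    simp only [mem_filter, mem_univ, true_and]
    rintro z ⟨hxz, hzy⟩
    exact ⟨hxz.trans (c.le_closure z), closure_min hzy hy, c.isClosed_closure z⟩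
  have hfiber : ∀ w, x ≤ w → w ≤ y →
      (univ.filter (fun z => x ≤ z ∧ z ≤ y)).filter (fun z => c z = w) =
        univ.filter (fun z => x ≤ z ∧ z ≤ w ∧ c z = w) := by
    intro w hxw hwy
    ext z
    simp only [mem_filter, mem_univ, true_and]
    constructor
    · rintro ⟨⟨hxz, -⟩, rfl⟩
      exact ⟨hxz, c.le_closure z, rfl⟩
    · rintro ⟨hxz, hzw, rfl⟩
      exact ⟨⟨hxz, hzw.trans hwy⟩, rfl⟩
  calc ∑ z ∈ univ.filter (fun z => x ≤ z ∧ z ≤ y ∧ c z = y), μ x z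
      = ∑ w ∈ univ.filter (fun w => x ≤ w ∧ w ≤ y ∧ c.IsClosed w),
          ∑ z ∈ (univ.filter (fun z => x ≤ z ∧ z ≤ y)).filter (fun z => c z = w),
            μ x z := by
        rw [← hfiber y hxy le_rfl]
        symm
        apply sum_eq_single_of_mem y
        · exact mem_filter.2 ⟨mem_univ y, hxy, le_rfl, hy⟩
        · simp only [mem_filter, mem_univ, true_and]
          rintro w ⟨hxw, hwy, hw⟩ hne
          rw [hfiber w hxw hwy]
          exact ih w (hwy.lt_of_ne hne) hw hxw
    _ = ∑ z ∈ univ.filter (fun z => x ≤ z ∧ z ≤ y), μ x z :=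
        sum_fiberwise_of_maps_to hmaps _
    _ = 0 := hsum x y hlt

theorem neg_one_pow_mul_mobius_nonneg (μ : β → β → ℤ) (hrefl : ∀ x, μ x x = 1)
    (hsum : ∀ x y, x < y → ∑ z ∈ univ.filter (fun z => x ≤ z ∧ z ≤ y), μ x z = 0)
    (r : β → ℕ) (hr : Monotone r)
    (hcover : ∀ x y, x < y → ∃ c : ClosureOperator β, ¬ c.IsClosed x ∧ c.IsClosed y ∧
      ∀ z, x ≤ z → z < y → c z = y → r y = r z + 1)
    {x y : β} (hxy : x ≤ y) : 0 ≤ (-1) ^ (r y - r x) * μ x y := by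
  induction y using WellFoundedLT.induction with
  | _ y ih =>
  obtain rfl | hlt := hxy.eq_or_lt
  · simp [hrefl]
  obtain ⟨c, hx, hy, hcover⟩ := hcover x y hlt
  set S := univ.filter (fun z => x ≤ z ∧ z ≤ y ∧ c z = y)
  have hyS : y ∈ S := mem_filter.2 ⟨mem_univ y, hxy, le_rfl, hy.closure_eq⟩
  have hS : ∀ z ∈ S.erase y, x ≤ z ∧ z < y ∧ c z = y := by
    intro z hz
    obtain ⟨hzy, hz⟩ := mem_erase.1 hz
    obtain ⟨-, hxz, hzy', hcz⟩ := mem_filter.1 hz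
    exact ⟨hxz, hzy'.lt_of_ne hzy, hcz⟩
  have hμ : μ x y = -∑ z ∈ S.erase y, μ x z := by
    have hW := c.sum_mobius_filter_closure_eq_zero μ hsum hx hy hxy
    rw [← add_sum_erase S _ hyS] at hW
    exact eq_neg_of_add_eq_zero_left hW
  have hsign : (-1) ^ (r y - r x) * μ x y = ∑ z ∈ S.erase y, (-1) ^ (r z - r x) * μ x z := by
    rw [hμ, mul_neg, mul_sum, ← sum_neg_distrib]
    refine sum_congr rfl fun z hz => ?_
    obtain ⟨hxz, hzy, hcz⟩ := hS z hz
    rw [hcover z hxz hzy hcz, Nat.sub_add_comm (hr hxz), pow_succ]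
    ring
  rw [hsign]
  exact sum_nonneg fun z hz => ih z (hS z hz).2.1 (hS z hz).1

end

namespace Matroid

variable {α : Type*} {M : Matroid α}

theorem mrank_eq_toNat_eRk [Finite α] (M : Matroid α) (X : Set α) :
    M.mrank X = (M.eRk X).toNat := by
  obtain ⟨I, hI⟩ := M.exists_isBasis' X
  refine IsGreatest.csSup_eq
    ⟨⟨I, ⟨hI.indep, hI.subset⟩, by rw [hI.eRk_eq_encard]; rfl⟩, ?_⟩
  rintro n ⟨J, ⟨hJ, hJX⟩, rfl⟩
  exact ENat.toNat_le_toNat (hJ.encard_le_eRk_of_subset hJX)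
    (eRk_ne_top_iff.2 (M.isRkFinite_of_finite X.toFinite))

theorem mrank_mono [Finite α] (M : Matroid α) : Monotone M.mrank := fun X Y hXY => by
  simp only [mrank_eq_toNat_eRk]
  exact ENat.toNat_le_toNat (M.eRk_mono hXY) (eRk_ne_top_iff.2 (M.isRkFinite_of_finite Y.toFinite))

theorem IsFlat.mrank_closure_insert [Finite α] {F : Set α} {a : α} (hF : M.IsFlat F)
    (ha : a ∈ M.E \ F) : M.mrank (M.closure (insert a F)) = M.mrank F + 1 := by
  rw [mrank_eq_toNat_eRk, mrank_eq_toNat_eRk, eRk_closure_eq,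
    eRk_insert_eq_add_one (by rwa [hF.closure]), ENat.toNat_add _ ENat.one_ne_top]
  · rfl
  · exact eRk_ne_top_iff.2 (M.isRkFinite_of_finite F.toFinite)

abbrev FinsetFlat (M : Matroid α) := {F : Finset α // M.IsFlat ↑F}

variable [Fintype α]

def insertClosureOperator (M : Matroid α) (a : α) :
    ClosureOperator M.FinsetFlat :=
  .mk' (fun F => ⟨(M.closure (insert a ↑F.1)).toFinset, by simp⟩)
    (fun F G hFG => by
      simp only [Subtype.mk_le_mk, ← Finset.coe_subset, Set.coe_toFinset]
      exact M.closure_subset_closure (Set.insert_subset_insert (Finset.coe_subset.2 hFG)))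
    (fun F => by
      simp only [← Subtype.coe_le_coe, ← Finset.coe_subset, Set.coe_toFinset]
      exact M.subset_closure_of_subset' (Set.subset_insert _ _) F.2.subset_ground)
    (fun F => by
      simp only [Subtype.mk_le_mk, ← Finset.coe_subset, Set.coe_toFinset,
        closure_insert_closure_eq_closure_insert, Set.insert_idem]
      exact subset_rfl)

theorem exists_insertClosureOperator_covers (F G : M.FinsetFlat) (hFG : F < G) :
    ∃ c : ClosureOperator M.FinsetFlat, ¬ c.IsClosed F ∧ c.IsClosed G ∧
      ∀ Z, F ≤ Z → Z < G → c Z = G → M.mrank ↑G.1 = M.mrank ↑Z.1 + 1 := by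
  obtain ⟨a, haG, haF⟩ := Finset.exists_of_ssubset (Subtype.coe_lt_coe.2 hFG)
  have hcoe : ∀ Z, ((M.insertClosureOperator a Z).1 : Set α) = M.closure (insert a ↑Z.1) :=
    fun Z => Set.coe_toFinset _
  have hclosed : ∀ Z : M.FinsetFlat, a ∈ Z.1 → (M.insertClosureOperator a).IsClosed Z := by
    intro Z haZ
    refine ClosureOperator.isClosed_iff_closure_le.2 (Finset.coe_subset.1 ?_)
    rw [hcoe, Set.insert_eq_of_mem (Finset.mem_coe.2 haZ), Z.2.closure]
  have haE : a ∈ M.E := G.2.subset_ground haG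
  have ha_mem : ∀ Z, a ∈ (M.insertClosureOperator a Z).1 := fun Z => by
    rw [← Finset.mem_coe, hcoe]
    exact M.mem_closure_of_mem' (Set.mem_insert a _) haE
  refine ⟨M.insertClosureOperator a, fun hF => haF (hF.closure_eq ▸ ha_mem F), hclosed G haG,
    fun Z _ hZG hZ => ?_⟩
  have haZ : a ∉ Z.1 := fun haZ => hZG.ne ((hclosed Z haZ).closure_eq ▸ hZ)
  rw [← hZ, hcoe, Z.2.mrank_closure_insert ⟨haE, haZ⟩]

end Matroid

/-- For a matroid `M` on a finite ground set, the Möbius function `μ` of the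
lattice of flats (characterized by `μ P P = 1` and `Σ_{P ⊆ Z ⊆ Q, Z flat} μ P Z = 0`
for flats `P ⊊ Q`) satisfies `(−1)^{rk(Q) − rk(P)} μ(P, Q) ≥ 0` for all flats
`P ⊆ Q`. -/
theorem flats_mobius_sign {α : Type*} [Fintype α] (M : Matroid α)
    (μ : Finset α → Finset α → ℤ)
    (hrefl : ∀ P : Finset α, M.IsFlat ↑P → μ P P = 1)
    (hsum : ∀ P Q : Finset α, M.IsFlat ↑P → M.IsFlat ↑Q → P ⊂ Q →
      ∑ Z ∈ Finset.univ.filter (fun Z : Finset α => M.IsFlat ↑Z ∧ P ⊆ Z ∧ Z ⊆ Q),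
        μ P Z = 0)
    (P Q : Finset α) (hP : M.IsFlat ↑P) (hQ : M.IsFlat ↑Q) (hPQ : P ⊆ Q) :
    0 ≤ (-1) ^ (M.mrank ↑Q - M.mrank ↑P) * μ P Q := by
  have hsum_flats : ∀ F G : M.FinsetFlat, F < G →
      ∑ Z ∈ univ.filter (fun Z => F ≤ Z ∧ Z ≤ G), μ F.1 Z.1 = 0 := fun F G hFG => by
    have := hsum F G F.2 G.2 hFG
    rw [← sum_filter_subtype_val] at this
    exact this
  exact neg_one_pow_mul_mobius_nonneg (β := M.FinsetFlat) (fun F G => μ F.1 G.1)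
    (fun F => hrefl F F.2) hsum_flats (fun F => M.mrank ↑F.1)
    (fun _ _ hFG => M.mrank_mono (Finset.coe_subset.2 hFG))
    Matroid.exists_insertClosureOperator_covers (x := ⟨P, hP⟩) (y := ⟨Q, hQ⟩) hPQ

end
end

section
/- Let M be a matroid on a finite ground set E, let r = rk(E), and define the Whitney numbers of the first kind w_k(M) by χ_M(T) = Σ_{k=0}^{r} (−1)^k w_k(M) T^{r−k}. Then w_k(M) ≥ 0 for all 0 ≤ k ≤ r. -/
open Classical

noncomputable section

/-- The characteristic polynomial of a matroid `M` on a finite ground set: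
`χ_M(T) = Σ_{A ⊆ E} (−1)^{|A|} T^{rk(E) − rk(A)}`. -/
def Matroid.charPoly {α : Type*} [Fintype α] (M : Matroid α) : Polynomial ℤ :=
  ∑ A ∈ (Set.toFinite M.E).toFinset.powerset,
    (-1) ^ A.card * Polynomial.X ^ (M.mrank M.E - M.mrank ↑A)

/-!
Order the ground set linearly. The coefficient of `T ^ (r - k)` in `χ_M` is the sum of `(-1) ^ |A|`
over the sets `A ⊆ E` of rank `k`. Call `e` a closer of `A` if `e` lies in the closure of the
elements of `A` below `e`, i.e. `A` contains a broken circuit (a circuit minus its largest element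
`e`). Toggling the least closer `e` in `A` changes neither the rank (as `e ∈ cl (A \ {e})`) nor the
least closer, so it is a sign-reversing involution. The surviving sets contain no broken circuit,
hence are independent, so each contributes `(-1) ^ k`; thus `w_k` is their number.
-/

open Finset Polynomial

open scoped symmDiff

lemma Finset.sum_eq_sum_filter_of_involution {ι β : Type*} [DecidableEq ι] [AddCommGroup β]
    {s : Finset ι} {f : ι → β} (g : ι → ι) (hg : ∀ a, g (g a) = a) (hs : ∀ a ∈ s, g a ∈ s)
    (hf : ∀ a ∈ s, g a ≠ a → f (g a) = -f a) :
    ∑ a ∈ s, f a = ∑ a ∈ s with g a = a, f a := by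
  have hmoved : ∑ a ∈ s with g a ≠ a, f a = 0 := by
    refine sum_involution (fun a _ ↦ g a) (fun a ha ↦ ?_) (fun a ha _ ↦ (mem_filter.1 ha).2)
      (fun a ha ↦ ?_) (fun a _ ↦ hg a)
    · rw [hf a (mem_filter.1 ha).1 (mem_filter.1 ha).2, add_neg_cancel]
    · obtain ⟨has, hga⟩ := mem_filter.1 ha
      exact mem_filter.2 ⟨hs a has, fun h ↦ hga (by rwa [hg, eq_comm] at h)⟩
  rw [← sum_filter_add_sum_filter_not s (fun a ↦ g a = a), hmoved, add_zero]

lemma Finset.symmDiff_singleton_of_mem {α : Type*} [DecidableEq α] {A : Finset α} {e : α}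
    (he : e ∈ A) : A ∆ {e} = A.erase e := by
  ext a
  by_cases hae : a = e <;> simp [mem_symmDiff, hae, he]

lemma Finset.symmDiff_singleton_of_notMem {α : Type*} [DecidableEq α] {A : Finset α} {e : α}
    (he : e ∉ A) : A ∆ {e} = insert e A := by
  ext a
  by_cases hae : a = e <;> simp [mem_symmDiff, hae, he]

lemma Finset.coe_symmDiff_singleton_subset {α : Type*} [DecidableEq α] {A : Finset α}
    {X : Set α} {e : α} (hA : ↑A ⊆ X) (he : e ∈ X) : ↑(A ∆ {e}) ⊆ X := by
  rw [coe_symmDiff, coe_singleton]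
  exact symmDiff_le_sup.trans (Set.union_subset hA (Set.singleton_subset_iff.2 he))

lemma Finset.coe_symmDiff_singleton_inter_Iio {α : Type*} [LinearOrder α] {A : Finset α}
    {e f : α} (hf : f ≤ e) :
    (↑(A ∆ {e}) : Set α) ∩ Set.Iio f = ↑A ∩ Set.Iio f := by
  ext a
  simp only [Set.mem_inter_iff, mem_coe, Set.mem_Iio, and_congr_left_iff]
  intro haf
  simp [mem_symmDiff, (haf.trans_le hf).ne]

lemma Finset.neg_one_pow_card_symmDiff_singleton {α : Type*} [DecidableEq α] (A : Finset α)
    (e : α) : (-1 : ℤ) ^ (A ∆ {e}).card = -(-1) ^ A.card := by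
  by_cases he : e ∈ A
  · rw [symmDiff_singleton_of_mem he, ← card_erase_add_one he, pow_succ, mul_neg_one, neg_neg]
  · rw [symmDiff_singleton_of_notMem he, card_insert_of_notMem he, pow_succ, mul_neg_one]

lemma Polynomial.coeff_sum_neg_one_pow_mul_X_pow (w : ℕ → ℤ) {r k : ℕ} (hk : k ≤ r) :
    (∑ j ∈ range (r + 1), (-1) ^ j * C (w j) * X ^ (r - j)).coeff (r - k) = (-1) ^ k * w k := by
  have hterm (j : ℕ) :
      ((-1) ^ j * C (w j) * X ^ (r - j) : ℤ[X]) = C ((-1) ^ j * w j) * X ^ (r - j) := by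
    simp
  simp only [hterm, finsetSum_coeff, coeff_C_mul_X_pow]
  rw [sum_eq_single_of_mem k (mem_range.2 (by omega)) fun j hj hjk ↦ if_neg (by grind), if_pos rfl]

namespace Matroid

variable {α : Type*} {M : Matroid α}

lemma eRk_insert_of_mem_closure {X : Set α} {e : α} (he : e ∈ M.closure X) :
    M.eRk (insert e X) = M.eRk X := by
  rw [← eRk_closure_eq, closure_insert_eq_of_mem_closure he, eRk_closure_eq]

lemma eRk_coe_symmDiff_singleton [DecidableEq α] {A : Finset α} {e : α}
    (he : e ∈ M.closure (↑A \ {e})) : M.eRk ↑(A ∆ {e}) = M.eRk ↑A := by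
  by_cases heA : e ∈ A
  · rw [symmDiff_singleton_of_mem heA, coe_erase, ← eRk_insert_of_mem_closure he,
      Set.insert_sdiff_singleton, Set.insert_eq_of_mem (mem_coe.2 heA)]
  · rw [Set.sdiff_singleton_eq_self (mem_coe.not.2 heA)] at he
    rw [symmDiff_singleton_of_notMem heA, coe_insert, eRk_insert_of_mem_closure he]

lemma cast_mrank [Finite α] (M : Matroid α) (A : Set α) : (M.mrank A : ℕ∞) = M.eRk A := by
  obtain ⟨I, hI⟩ := M.exists_isBasis' A
  have hgreatest : IsGreatest (Set.ncard '' {J | M.Indep J ∧ J ⊆ A}) I.ncard := by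
    refine ⟨⟨I, ⟨hI.indep, hI.subset⟩, rfl⟩, ?_⟩
    rintro _ ⟨J, ⟨hJ, hJA⟩, rfl⟩
    have := hJ.encard_le_eRk_of_subset hJA
    rw [← hI.encard_eq_eRk, ← J.toFinite.cast_ncard_eq, ← I.toFinite.cast_ncard_eq] at this
    exact_mod_cast this
  rw [mrank, hgreatest.csSup_eq, I.toFinite.cast_ncard_eq, hI.encard_eq_eRk]

lemma mrank_mono_s9 [Finite α] (M : Matroid α) {A B : Set α} (h : A ⊆ B) : M.mrank A ≤ M.mrank B := by
  have := M.eRk_mono h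
  rwa [← cast_mrank, ← cast_mrank, Nat.cast_le] at this

section BrokenCircuits

variable [LinearOrder α]

/-- `e` closes a broken circuit of `A`: either `e` is a loop, or some circuit with largest element
`e` has all its other elements in `A`. -/
def brokenCircuitClosers (M : Matroid α) (A : Finset α) : Set α :=
  {e | e ∈ M.closure (↑A ∩ Set.Iio e)}

lemma mem_brokenCircuitClosers_symmDiff_iff {A : Finset α} {e f : α} (hf : f ≤ e) :
    f ∈ M.brokenCircuitClosers (A ∆ {e}) ↔ f ∈ M.brokenCircuitClosers A := by
  simp only [brokenCircuitClosers, Set.mem_ofPred_eq, coe_symmDiff_singleton_inter_Iio hf]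

lemma isLeast_brokenCircuitClosers_symmDiff {A : Finset α} {e : α}
    (he : IsLeast (M.brokenCircuitClosers A) e) : IsLeast (M.brokenCircuitClosers (A ∆ {e})) e :=
  ⟨(mem_brokenCircuitClosers_symmDiff_iff le_rfl).2 he.1, fun _ hf ↦ le_of_not_gt fun hfe ↦
    hfe.not_ge (he.2 ((mem_brokenCircuitClosers_symmDiff_iff hfe.le).1 hf))⟩

lemma brokenCircuitClosers_mono {A B : Finset α} (h : A ⊆ B) :
    M.brokenCircuitClosers A ⊆ M.brokenCircuitClosers B :=
  fun _ he ↦ M.closure_subset_closure (Set.inter_subset_inter_left _ (coe_subset.2 h)) he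

lemma indep_of_brokenCircuitClosers_eq_empty {A : Finset α} (hA : ↑A ⊆ M.E)
    (h : M.brokenCircuitClosers A = ∅) : M.Indep ↑A := by
  induction A using Finset.induction_on_max with
  | empty => simp
  | insert a A hlt ih =>
    have hAa : A ⊆ insert a A := subset_insert a A
    have hIndep : M.Indep ↑A := ih ((coe_subset.2 hAa).trans hA)
      (Set.subset_eq_empty (brokenCircuitClosers_mono hAa) h)
    have haA : a ∉ A := fun ha ↦ (hlt a ha).false
    have hIio : (↑(insert a A) : Set α) ∩ Set.Iio a = ↑A := by
      ext x
      simp only [coe_insert, Set.mem_inter_iff, Set.mem_insert_iff, mem_coe, Set.mem_Iio]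
      exact ⟨fun ⟨hx, hxa⟩ ↦ hx.resolve_left hxa.ne, fun hx ↦ ⟨Or.inr hx, hlt x hx⟩⟩
    have hacl : a ∉ M.closure ↑A := fun ha ↦
      (Set.eq_empty_iff_forall_notMem.1 h) a (show a ∈ M.closure _ by rwa [hIio])
    rw [coe_insert, hIndep.insert_indep_iff_of_notMem (mem_coe.not.2 haA)]
    exact ⟨hA (by simp), hacl⟩

variable [WellFoundedLT α]

lemma brokenCircuitClosers_eq_empty_or_exists_isLeast (M : Matroid α) (A : Finset α) :
    M.brokenCircuitClosers A = ∅ ∨ ∃ e, IsLeast (M.brokenCircuitClosers A) e := by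
  refine (Set.eq_empty_or_nonempty _).imp_right fun h ↦ ?_
  exact ⟨_, wellFounded_lt.min_mem _ h, fun _ hf ↦ wellFounded_lt.min_le hf⟩

def nbcToggle (M : Matroid α) (A : Finset α) : Finset α :=
  if h : (M.brokenCircuitClosers A).Nonempty then A ∆ {wellFounded_lt.min _ h} else A

lemma nbcToggle_of_isLeast {A : Finset α} {e : α} (he : IsLeast (M.brokenCircuitClosers A) e) :
    M.nbcToggle A = A ∆ {e} := by
  rw [nbcToggle, dif_pos he.nonempty,
    (IsLeast.unique ⟨wellFounded_lt.min_mem _ _, fun _ hf ↦ wellFounded_lt.min_le hf⟩ he)]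

lemma nbcToggle_of_eq_empty {A : Finset α} (h : M.brokenCircuitClosers A = ∅) :
    M.nbcToggle A = A := by
  rw [nbcToggle, dif_neg (Set.not_nonempty_iff_eq_empty.2 h)]

lemma nbcToggle_nbcToggle (A : Finset α) : M.nbcToggle (M.nbcToggle A) = A := by
  obtain h | ⟨e, he⟩ := M.brokenCircuitClosers_eq_empty_or_exists_isLeast A
  · rw [nbcToggle_of_eq_empty h, nbcToggle_of_eq_empty h]
  · rw [nbcToggle_of_isLeast he, nbcToggle_of_isLeast (isLeast_brokenCircuitClosers_symmDiff he),
      symmDiff_symmDiff_cancel_right]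

lemma eRk_nbcToggle (A : Finset α) : M.eRk ↑(M.nbcToggle A) = M.eRk ↑A := by
  obtain h | ⟨e, he⟩ := M.brokenCircuitClosers_eq_empty_or_exists_isLeast A
  · rw [nbcToggle_of_eq_empty h]
  · rw [nbcToggle_of_isLeast he]
    refine eRk_coe_symmDiff_singleton (M.closure_subset_closure ?_ he.1)
    exact fun x ⟨hxA, hxe⟩ ↦ ⟨hxA, (Set.mem_Iio.1 hxe).ne⟩

lemma nbcToggle_subset_ground {A : Finset α} (hA : ↑A ⊆ M.E) : ↑(M.nbcToggle A) ⊆ M.E := by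
  obtain h | ⟨e, he⟩ := M.brokenCircuitClosers_eq_empty_or_exists_isLeast A
  · rwa [nbcToggle_of_eq_empty h]
  · rw [nbcToggle_of_isLeast he]
    exact coe_symmDiff_singleton_subset hA (mem_ground_of_mem_closure he.1)

lemma neg_one_pow_card_nbcToggle {A : Finset α} (h : M.nbcToggle A ≠ A) :
    (-1 : ℤ) ^ (M.nbcToggle A).card = -(-1) ^ A.card := by
  obtain h' | ⟨e, he⟩ := M.brokenCircuitClosers_eq_empty_or_exists_isLeast A
  · exact absurd (nbcToggle_of_eq_empty h') h
  · rw [nbcToggle_of_isLeast he, neg_one_pow_card_symmDiff_singleton]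

lemma brokenCircuitClosers_eq_empty_of_nbcToggle_eq_self {A : Finset α} (h : M.nbcToggle A = A) :
    M.brokenCircuitClosers A = ∅ := by
  obtain h' | ⟨e, he⟩ := M.brokenCircuitClosers_eq_empty_or_exists_isLeast A
  · exact h'
  · rw [nbcToggle_of_isLeast he, symmDiff_eq_left] at h
    exact absurd h (singleton_ne_empty e)

theorem sum_neg_one_pow_card_filter_eRk_eq {E : Finset α} (hE : ↑E = M.E) (k : ℕ) :
    ∑ A ∈ E.powerset with M.eRk ((A : Finset α) : Set α) = k, (-1 : ℤ) ^ A.card =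
      #{A ∈ E.powerset | M.eRk ((A : Finset α) : Set α) = k ∧ M.nbcToggle A = A} * (-1) ^ k := by
  have hmem (A : Finset α) (hA : A ∈ {A ∈ E.powerset | M.eRk ((A : Finset α) : Set α) = k}) :
      M.nbcToggle A ∈ {A ∈ E.powerset | M.eRk ((A : Finset α) : Set α) = k} := by
    simp only [mem_filter, mem_powerset, ← coe_subset, hE, eRk_nbcToggle] at hA ⊢
    exact ⟨nbcToggle_subset_ground hA.1, hA.2⟩
  rw [sum_eq_sum_filter_of_involution M.nbcToggle nbcToggle_nbcToggle hmem
    fun A _ h ↦ neg_one_pow_card_nbcToggle h, filter_filter, ← nsmul_eq_mul, ← sum_const]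
  refine sum_congr rfl fun A hA ↦ ?_
  simp only [mem_filter, mem_powerset, ← coe_subset, hE] at hA
  obtain ⟨hAE, hk, hfix⟩ := hA
  have hind := indep_of_brokenCircuitClosers_eq_empty hAE
    (brokenCircuitClosers_eq_empty_of_nbcToggle_eq_self hfix)
  rw [hind.eRk_eq_encard, Set.encard_coe_eq_coe_finsetCard, Nat.cast_inj] at hk
  rw [hk]

end BrokenCircuits

lemma coeff_charPoly [Fintype α] (M : Matroid α) {k : ℕ} (hk : k ≤ M.mrank M.E) :
    M.charPoly.coeff (M.mrank M.E - k) =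
      ∑ A ∈ (Set.toFinite M.E).toFinset.powerset with M.eRk ((A : Finset α) : Set α) = k,
        (-1 : ℤ) ^ A.card := by
  rw [charPoly, finsetSum_coeff, sum_filter]
  refine sum_congr rfl fun A hA ↦ ?_
  have hle := M.mrank_mono_s9 (Set.Finite.subset_toFinset.1 (mem_powerset.1 hA))
  simp only [← cast_mrank, Nat.cast_inj]
  rw [show (-1 : ℤ[X]) ^ A.card = C ((-1) ^ A.card) by simp, coeff_C_mul_X_pow]
  split_ifs <;> omega

end Matroid

/-- The Whitney numbers of the first kind `w_k(M)`, defined by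
`χ_M(T) = Σ_{k=0}^r (−1)^k w_k(M) T^{r−k}` with `r = rk(E)`, are nonnegative. -/
theorem whitney_first_kind_nonneg {α : Type*} [Fintype α] (M : Matroid α)
    (r : ℕ) (hr : r = M.mrank M.E) (w : ℕ → ℤ)
    (hw : M.charPoly = ∑ k ∈ Finset.range (r + 1),
        (-1) ^ k * Polynomial.C (w k) * Polynomial.X ^ (r - k)) :
    ∀ k ≤ r, 0 ≤ w k := by
  intro k hk
  let : LinearOrder α := LinearOrder.lift' _ (Fintype.equivFin α).injective
  have hcoeff := M.coeff_charPoly (hr ▸ hk)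
  rw [← hr, hw, coeff_sum_neg_one_pow_mul_X_pow w hk,
    Matroid.sum_neg_one_pow_card_filter_eRk_eq (Set.Finite.coe_toFinset _) k,
    mul_comm _ ((-1 : ℤ) ^ k)] at hcoeff
  rw [mul_left_cancel₀ (pow_ne_zero k (by norm_num)) hcoeff]
  positivity

end
end

section
/- (Abstract Khovanskii–Teissier inequality) Let A be a commutative ℝ-algebra, deg : A → ℝ an ℝ-linear map, r ≥ 2 an integer, W an ℝ-linear subspace of A, and α, β ∈ W. Assume that deg(α^r) > 0 and that for every nonzero x ∈ W with deg(α^{r−1}·x) = 0 one has deg(α^{r−2}·x·x) < 0 (Hodge–Riemann relations in degree 1). Then deg(α^{r−2}·β·β) · deg(α^r) ≤ (deg(α^{r−1}·β))^2. -/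
/-- (Abstract Khovanskii–Teissier inequality) Let `A` be a commutative `ℝ`-algebra,
`deg : A → ℝ` an `ℝ`-linear map, `r ≥ 2`, `W ⊆ A` a linear subspace, and
`α, β ∈ W`. If `deg(α^r) > 0` and `deg(α^{r−2}·x·x) < 0` for every nonzero
`x ∈ W` with `deg(α^{r−1}·x) = 0` (Hodge–Riemann in degree 1), then
`deg(α^{r−2}·β·β) · deg(α^r) ≤ (deg(α^{r−1}·β))²`. -/
theorem abstract_khovanskii_teissier {A : Type*} [CommRing A] [Algebra ℝ A]
    (deg : A →ₗ[ℝ] ℝ) (r : ℕ) (hr : 2 ≤ r) (W : Submodule ℝ A)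
    (α β : A) (hα : α ∈ W) (hβ : β ∈ W)
    (hpos : 0 < deg (α ^ r))
    (hHR : ∀ x ∈ W, x ≠ 0 → deg (α ^ (r - 1) * x) = 0 →
      deg (α ^ (r - 2) * x * x) < 0) :
    deg (α ^ (r - 2) * β * β) * deg (α ^ r) ≤ (deg (α ^ (r - 1) * β)) ^ 2 := by
  have hp1 : α ^ (r - 2) * α = α ^ (r - 1) := by
    rw [← pow_succ]
    congr 1
    omega
  have hp2 : α ^ (r - 1) * α = α ^ r := by
    rw [← pow_succ]
    congr 1
    omega
  set a : ℝ := deg (α ^ r) with ha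
  set b : ℝ := deg (α ^ (r - 1) * β) with hb
  set x : A := a • β - b • α with hx
  have hxW : x ∈ W := W.sub_mem (W.smul_mem a hβ) (W.smul_mem b hα)
  have hdx : deg (α ^ (r - 1) * x) = 0 := by
    rw [hx, mul_sub, mul_smul_comm, mul_smul_comm, map_sub, map_smul, map_smul,
      hp2, smul_eq_mul, smul_eq_mul, ← hb, ← ha]
    ring
  have hexp : α ^ (r - 2) * x * x =
      (a * a) • (α ^ (r - 2) * β * β) - (2 * (a * b)) • (α ^ (r - 1) * β)
        + (b * b) • (α ^ r) := by
    rw [hx, ← hp2, ← hp1]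
    simp only [Algebra.smul_def, map_mul, map_ofNat]
    ring
  have hstep : deg (α ^ (r - 2) * x * x) = a * a * deg (α ^ (r - 2) * β * β)
      - 2 * (a * b) * b + b * b * a := by
    rw [hexp, map_add, map_sub, map_smul, map_smul, map_smul]
    simp [smul_eq_mul, ← ha, ← hb]
  by_cases hx0 : x = 0
  · have h0 : deg (α ^ (r - 2) * x * x) = 0 := by rw [hx0]; simp
    rw [hstep] at h0
    nlinarith
  · have := hHR x hxW hx0 hdx
    rw [hstep] at this
    nlinarith
end
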